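/- Let A(Z,Z̄) be a bihomogeneous Hermitian polynomial in Z = (Z₀,Z₁,…,Zₙ) with A(Z,Z̄) = Σ_{i=1}^p |Fᵢ(Z)|², where F₁,…,F_p are linearly independent homogeneous polynomials of a common degree d. Suppose ‖Z‖²·A(Z,Z̄) = Σ_{j=1}^R |Hⱼ(Z)|² where H₁,…,H_R are linearly independent homogeneous polynomials of degree d+1. If p ≥ n+1, then R ≥ (n+1)(n+2)/2. -/

import Mathlib

/-!
Polarizing the identity `Σ_{k,i} |Z_k F_i(Z)|² = Σ_j |H_j(Z)|²` of Hermitian polynomials shows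
that every `Z_k F_i` lies in the span of the `H_j`. Since `dim span F ≥ n + 1`, there are `n + 1`
elements of `span F` with distinct lexicographic leading exponents `μ`; multiplying them by the
`Z_k` gives elements of `span H` with leading exponents `e_k + μ`. Two translates `μ + {e_k}` and
`ν + {e_k}` meet in at most one point, so at least `(n+1)² - C(n+1, 2) = (n+1)(n+2)/2` distinct
leading exponents occur in `span H`, and elements with distinct leading exponents are linearly
independent.
-/

open MvPolynomial Module Submodule Finset
open Complex (I)
open scoped ComplexConjugate

namespace MvPolynomial

variable {σ ι κ : Type*} [Fintype ι] [Fintype κ]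

/-- The invertible substitution `W = x - i y`, `Z = x + i y` turns `E` into a polynomial vanishing
at all real points. -/
theorem eq_zero_of_eval_conj_eq_zero {E : MvPolynomial (σ ⊕ σ) ℂ}
    (h : ∀ Z : σ → ℂ, eval (Sum.elim (conj ∘ Z) Z) E = 0) : E = 0 := by
  let φ : σ ⊕ σ → MvPolynomial (σ ⊕ σ) ℂ :=
    Sum.elim (fun j => X (.inl j) - C I * X (.inr j)) (fun j => X (.inl j) + C I * X (.inr j))
  have eval_bind : ∀ v, eval v (bind₁ φ E) =
      eval (Sum.elim (fun j => v (.inl j) - I * v (.inr j)) (fun j => v (.inl j) + I * v (.inr j)))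
        E := by
    intro v
    refine (eval₂Hom_bind₁ _ _ _ _).trans (congrArg (eval · E) ?_)
    ext (j | j) <;> simp [φ]
  have hφE : bind₁ φ E = 0 := by
    refine funext_set (fun _ => Set.range ((↑) : ℝ → ℂ))
      (fun _ => Set.infinite_range_of_injective Complex.ofReal_injective) fun v hv => ?_
    choose x hx using fun i => hv i (Set.mem_univ i)
    rw [eval_bind, map_zero]
    convert h fun j => v (.inl j) + I * v (.inr j) using 3
    ext (j | j) <;> simp [← hx, Complex.ext_iff]
  refine funext fun v => ?_
  let w : σ ⊕ σ → ℂ := Sum.elim (fun j => (v (.inl j) + v (.inr j)) / 2)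
    (fun j => I * (v (.inl j) - v (.inr j)) / 2)
  have hw : Sum.elim (fun j => w (.inl j) - I * w (.inr j))
      (fun j => w (.inl j) + I * w (.inr j)) = v := by
    funext x
    cases x with
    | inl j =>
      simp only [w, Sum.elim_inl, Sum.elim_inr]
      linear_combination (v (.inr j) - v (.inl j)) / 2 * Complex.I_sq
    | inr j =>
      simp only [w, Sum.elim_inl, Sum.elim_inr]
      linear_combination (v (.inl j) - v (.inr j)) / 2 * Complex.I_sq
  rw [map_zero, ← hw, ← eval_bind, hφE, map_zero]

noncomputable def hermSumSq (G : ι → MvPolynomial σ ℂ) : MvPolynomial (σ ⊕ σ) ℂ :=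
  ∑ a, rename Sum.inl (map conj (G a)) * rename Sum.inr (G a)

theorem eval_hermSumSq (G : ι → MvPolynomial σ ℂ) (Z : σ → ℂ) :
    eval (Sum.elim (conj ∘ Z) Z) (hermSumSq G) = ∑ a, (‖eval Z (G a)‖ ^ 2 : ℂ) := by
  simp only [hermSumSq, map_sum, map_mul, eval_rename, Sum.elim_comp_inl, Sum.elim_comp_inr,
    ← map_eval, Complex.conj_mul']

theorem coeff_sumAlgEquiv_hermSumSq (G : ι → MvPolynomial σ ℂ) (α : σ →₀ ℕ) :
    coeff α (sumAlgEquiv ℂ σ σ (hermSumSq G)) = ∑ a, conj (coeff α (G a)) • G a := by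
  have hinl (f : MvPolynomial σ ℂ) : sumAlgEquiv ℂ σ σ (rename Sum.inl f) = map C f := by
    simpa [algebraMap_eq] using AlgHom.congr_fun (sumAlgEquiv_comp_rename_inl ℂ σ σ) f
  have hinr (f : MvPolynomial σ ℂ) : sumAlgEquiv ℂ σ σ (rename Sum.inr f) = C f := by
    simpa [algebraMap_eq] using AlgHom.congr_fun (sumAlgEquiv_comp_rename_inr ℂ σ σ) f
  simp [hermSumSq, hinl, hinr, coeff_sum, smul_eq_C_mul, mul_comm _ (C _), coeff_C_mul, coeff_map]

/-- This is `range (V Vᴴ) = range V` for the coefficient matrix `V` of `g`: decompose `e_b`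
orthogonally along the span of the conjugated rows of `V`. -/
theorem mem_span_range_sum_conj_coeff_smul (g : ι → MvPolynomial σ ℂ) (b : ι) :
    g b ∈ span ℂ (Set.range fun α => ∑ a, conj (coeff α (g a)) • g a) := by
  classical
  let T : EuclideanSpace ℂ ι →ₗ[ℂ] MvPolynomial σ ℂ :=
    Fintype.linearCombination ℂ g ∘ₗ (WithLp.linearEquiv 2 ℂ (ι → ℂ)).toLinearMap
  let r : (σ →₀ ℕ) → EuclideanSpace ℂ ι := fun α =>
    WithLp.toLp 2 fun a => conj (coeff α (g a))
  have hTr : ∀ α, T (r α) = ∑ a, conj (coeff α (g a)) • g a := fun α => by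
    simp [T, r, Fintype.linearCombination_apply]
  have hTz : ∀ z ∈ (span ℂ (Set.range r))ᗮ, T z = 0 := fun z hz => by
    ext α
    have := hz (r α) (subset_span ⟨α, rfl⟩)
    simpa [T, r, Fintype.linearCombination_apply, coeff_sum,
      EuclideanSpace.inner_eq_star_dotProduct, dotProduct, mul_comm] using this
  obtain ⟨y, hy, z, hz, hyz⟩ := (span ℂ (Set.range r)).exists_add_mem_mem_orthogonal
    (EuclideanSpace.single b 1)
  have hgb : g b = T y := by
    rw [← add_zero (T y), ← hTz z hz, ← map_add, ← hyz]
    simp [T, Fintype.linearCombination_apply]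
  have hTy : T y ∈ (span ℂ (Set.range r)).map T := mem_map_of_mem hy
  rwa [map_span, ← Set.range_comp, show T ∘ r = _ from _root_.funext hTr, ← hgb] at hTy

theorem mem_span_of_forall_sum_norm_sq_eq {G : ι → MvPolynomial σ ℂ} {H : κ → MvPolynomial σ ℂ}
    (h : ∀ Z, ∑ a, ‖eval Z (G a)‖ ^ 2 = ∑ j, ‖eval Z (H j)‖ ^ 2) (b : ι) :
    G b ∈ span ℂ (Set.range H) := by
  have hGH : hermSumSq G = hermSumSq H := sub_eq_zero.1 <| eq_zero_of_eval_conj_eq_zero fun Z => by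
    rw [map_sub, eval_hermSumSq, eval_hermSumSq, sub_eq_zero]
    exact_mod_cast h Z
  refine span_le.2 (Set.range_subset_iff.2 fun α => ?_) (mem_span_range_sum_conj_coeff_smul G b)
  rw [SetLike.mem_coe, ← coeff_sumAlgEquiv_hermSumSq, hGH, coeff_sumAlgEquiv_hermSumSq]
  exact sum_mem fun j _ => smul_mem _ _ (subset_span ⟨j, rfl⟩)

end MvPolynomial

namespace MonomialOrder

variable {σ K : Type*} [Field K] (m : MonomialOrder σ)

def degreeSet (V : Submodule K (MvPolynomial σ K)) : Set (σ →₀ ℕ) :=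
  {μ | ∃ f ∈ V, f ≠ 0 ∧ m.degree f = μ}

theorem linearIndependent_of_injective_degree {ι : Type*} {f : ι → MvPolynomial σ K}
    (hf : ∀ i, f i ≠ 0) (hinj : (m.degree ∘ f).Injective) : LinearIndependent K f := by
  classical
  rw [linearIndependent_iff']
  intro s c hsum i hi
  by_contra hci
  obtain ⟨i₀, hi₀, hmax⟩ := (s.filter (c · ≠ 0)).exists_max_image
    (fun i => m.toSyn (m.degree (f i))) ⟨i, mem_filter.2 ⟨hi, hci⟩⟩
  rw [mem_filter] at hi₀
  have hcoeff :
      coeff (m.degree (f i₀)) (∑ i ∈ s, c i • f i) = c i₀ * m.leadingCoeff (f i₀) := by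
    rw [coeff_sum, sum_eq_single_of_mem i₀ hi₀.1]
    · rfl
    intro j hj hji
    by_cases hcj : c j = 0
    · simp [hcj]
    rw [coeff_smul, m.coeff_eq_zero_of_lt, smul_zero]
    exact (hmax j (mem_filter.2 ⟨hj, hcj⟩)).lt_of_ne fun h => hji (hinj (m.toSyn.injective h))
  rw [hsum, coeff_zero] at hcoeff
  exact mul_ne_zero hi₀.2 (m.leadingCoeff_ne_zero_iff.2 (hf i₀)) hcoeff.symm

theorem card_le_finrank_of_subset_degreeSet {V : Submodule K (MvPolynomial σ K)}
    [FiniteDimensional K V] {D : Finset (σ →₀ ℕ)} (hD : ↑D ⊆ m.degreeSet V) :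
    #D ≤ finrank K V := by
  choose f hfV hf0 hfdeg using fun μ : D => hD μ.2
  have hli : LinearIndependent K fun μ => (⟨f μ, hfV μ⟩ : V) :=
    .of_comp V.subtype <| m.linearIndependent_of_injective_degree hf0
      fun μ ν h => Subtype.ext <| by simpa [hfdeg] using h
  simpa using hli.fintype_card_le_finrank

theorem exists_finset_subset_degreeSet_finrank_le (V : Submodule K (MvPolynomial σ K))
    [FiniteDimensional K V] :
    ∃ D : Finset (σ →₀ ℕ), ↑D ⊆ m.degreeSet V ∧ finrank K V ≤ #D := by
  classical
  let b := Module.finBasis K V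
  let U := univ.biUnion fun i => (b i : MvPolynomial σ K).support
  have hU : ∀ f ∈ V, f ≠ 0 → m.degree f ∈ U := by
    intro f hf hf0
    set c := b.repr ⟨f, hf⟩
    have hsum : ∑ i, c i • (b i : MvPolynomial σ K) = f := by
      simpa only [Submodule.coe_sum, Submodule.coe_smul] using
        congrArg Subtype.val (b.sum_repr ⟨f, hf⟩)
    have hdeg : m.degree f ∈ (∑ i, c i • (b i : MvPolynomial σ K)).support := by
      rw [hsum]
      exact m.degree_mem_support hf0
    obtain ⟨i, -, hi⟩ := mem_biUnion.1 (support_sum hdeg)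
    exact mem_biUnion.2 ⟨i, mem_univ i, support_smul hi⟩
  let D := U.filter (· ∈ m.degreeSet V)
  let Φ : V →ₗ[K] (D → K) := LinearMap.pi fun μ => lcoeff K μ.1 ∘ₗ V.subtype
  have hΦ : Function.Injective Φ := by
    rw [← LinearMap.ker_eq_bot, LinearMap.ker_eq_bot']
    intro f hf
    by_contra hf0
    have hf0' : (f : MvPolynomial σ K) ≠ 0 := by simpa using hf0
    have hmem : m.degree (f : MvPolynomial σ K) ∈ D :=
      mem_filter.2 ⟨hU f f.2 hf0', f, f.2, hf0', rfl⟩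
    have := congrFun hf ⟨_, hmem⟩
    exact m.coeff_degree_ne_zero_iff.2 hf0' this
  refine ⟨D, fun μ hμ => (mem_filter.1 hμ).2, ?_⟩
  simpa using LinearMap.finrank_le_finrank_of_injective hΦ

theorem single_add_mem_degreeSet {V W : Submodule K (MvPolynomial σ K)} {μ : σ →₀ ℕ}
    (hμ : μ ∈ m.degreeSet V) (k : σ) (hVW : ∀ f ∈ V, X k * f ∈ W) :
    Finsupp.single k 1 + μ ∈ m.degreeSet W := by
  obtain ⟨f, hfV, hf0, rfl⟩ := hμ
  exact ⟨X k * f, hVW f hfV, mul_ne_zero (X_ne_zero k) hf0,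
    by rw [m.degree_mul (X_ne_zero k) hf0, m.degree_X]⟩

end MonomialOrder

namespace Finsupp

variable {σ : Type*} [Fintype σ] [DecidableEq σ]

noncomputable def unitShifts (μ : σ →₀ ℕ) : Finset (σ →₀ ℕ) :=
  univ.image fun k => single k 1 + μ

theorem card_unitShifts (μ : σ →₀ ℕ) : #(unitShifts μ) = Fintype.card σ :=
  card_image_of_injective _ <| (add_left_injective μ).comp (single_left_injective one_ne_zero)

theorem card_unitShifts_inter_le_one {μ ν : σ →₀ ℕ} (hμν : μ ≠ ν) :
    #(unitShifts μ ∩ unitShifts ν) ≤ 1 := by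
  simp only [card_le_one, mem_inter, unitShifts, mem_image, mem_univ, true_and]
  rintro _ ⟨⟨k, rfl⟩, l, hkl⟩ _ ⟨⟨k', rfl⟩, l', hkl'⟩
  have hsingles : single k 1 + single l' 1 = single l 1 + single k' 1 := by
    apply add_right_cancel (b := μ + ν)
    calc single k 1 + single l' 1 + (μ + ν) = (single k 1 + μ) + (single l' 1 + ν) := by abel
      _ = (single l 1 + ν) + (single k' 1 + μ) := by rw [← hkl, hkl']
      _ = single l 1 + single k' 1 + (μ + ν) := by abel
  rcases (single_add_single_eq_single_add_single one_ne_zero one_ne_zero).1 hsingles with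
    ⟨rfl, -⟩ | ⟨-, rfl, -⟩ | ⟨h, -⟩
  · exact absurd (add_left_cancel hkl) hμν.symm
  · rfl
  · exact absurd h (by norm_num)

theorem card_mul_le_card_biUnion_unitShifts_add_choose (M : Finset (σ →₀ ℕ)) :
    Fintype.card σ * #M ≤ #(M.biUnion unitShifts) + (#M).choose 2 := by
  induction M using Finset.induction_on with
  | empty => simp
  | insert μ M hμ ih =>
    have hinter : #(unitShifts μ ∩ M.biUnion unitShifts) ≤ #M := by
      rw [inter_biUnion]
      simpa using card_biUnion_le_card_mul M _ 1 fun ν hν =>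
        card_unitShifts_inter_le_one (ne_of_mem_of_not_mem hν hμ).symm
    have hunion := card_union_add_card_inter (unitShifts μ) (M.biUnion unitShifts)
    rw [card_unitShifts] at hunion
    have hchoose : (#M + 1).choose 2 = (#M).choose 2 + #M := by
      simp [Nat.choose_succ_succ', add_comm]
    rw [biUnion_insert, card_insert_of_notMem hμ, hchoose, mul_add_one]
    omega

theorem card_mul_card_add_one_div_two_le_card_biUnion_unitShifts (M : Finset (σ →₀ ℕ))
    (hM : #M = Fintype.card σ) : #M * (#M + 1) / 2 ≤ #(M.biUnion unitShifts) := by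
  have hcount := card_mul_le_card_biUnion_unitShifts_add_choose M
  rw [← hM] at hcount
  generalize #M = N at hcount ⊢
  rcases N with _ | N
  · simp
  rw [Nat.choose_two_right, Nat.add_sub_cancel] at hcount
  have h1 : (N + 1) * (N + 1 + 1) = (N + 1) * N + 2 * (N + 1) := by ring
  have h2 : (N + 1) * (N + 1) = (N + 1) * N + (N + 1) := by ring
  omega

end Finsupp

theorem sos_rank_bihomogeneous_high_rank_general
    (n p R : ℕ)
    (F : Fin p → MvPolynomial (Fin (n + 1)) ℂ)
    (H : Fin R → MvPolynomial (Fin (n + 1)) ℂ)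
    (hFli : LinearIndependent ℂ F)
    (heq : ∀ Z : Fin (n + 1) → ℂ,
      (∑ j, ‖Z j‖ ^ 2) * (∑ i, ‖MvPolynomial.eval Z (F i)‖ ^ 2)
        = ∑ j, ‖MvPolynomial.eval Z (H j)‖ ^ 2)
    (hpn : n + 1 ≤ p) :
    (n + 1) * (n + 2) / 2 ≤ R := by
  let m : MonomialOrder (Fin (n + 1)) := MonomialOrder.lex
  have hXF : ∀ k i, X k * F i ∈ span ℂ (Set.range H) := fun k i =>
    mem_span_of_forall_sum_norm_sq_eq (G := fun a : Fin (n + 1) × Fin p => X a.1 * F a.2)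
      (fun Z => by simpa [norm_mul, mul_pow, Fintype.sum_prod_type, sum_mul_sum] using heq Z) (k, i)
  have hXspan : ∀ k, ∀ f ∈ span ℂ (Set.range F), X k * f ∈ span ℂ (Set.range H) :=
    fun k _ hf => (span_le (p := (span ℂ (Set.range H)).comap (LinearMap.mulLeft ℂ (X k)))).2
      (Set.range_subset_iff.2 (hXF k)) hf
  have := FiniteDimensional.span_of_finite ℂ (Set.finite_range F)
  have := FiniteDimensional.span_of_finite ℂ (Set.finite_range H)
  obtain ⟨D, hDdeg, hDcard⟩ :=
    m.exists_finset_subset_degreeSet_finrank_le (span ℂ (Set.range F))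
  rw [finrank_span_eq_card hFli, Fintype.card_fin] at hDcard
  obtain ⟨M, hMD, hMcard⟩ := exists_subset_card_eq (hpn.trans hDcard)
  have hPdeg : ↑(M.biUnion Finsupp.unitShifts) ⊆ m.degreeSet (span ℂ (Set.range H)) := by
    intro ν hν
    obtain ⟨μ, hμ, hν⟩ := mem_biUnion.1 hν
    obtain ⟨k, -, rfl⟩ := mem_image.1 hν
    exact m.single_add_mem_degreeSet (hDdeg (hMD hμ)) k (hXspan k)
  calc (n + 1) * (n + 2) / 2 = #M * (#M + 1) / 2 := by rw [hMcard]
    _ ≤ #(M.biUnion Finsupp.unitShifts) :=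
      Finsupp.card_mul_card_add_one_div_two_le_card_biUnion_unitShifts M (by simp [hMcard])
    _ ≤ finrank ℂ (span ℂ (Set.range H)) := m.card_le_finrank_of_subset_degreeSet hPdeg
    _ ≤ R := (finrank_range_le_card H).trans_eq (Fintype.card_fin R)

/-- Proposition 3 of [GrHa13], case `p ≥ n+1`:
If `A(Z,Z̄) = Σ_{i=1}^p |F_i(Z)|²` with `F_i` linearly independent homogeneous polynomials
of degree `d`, and `‖Z‖² A(Z,Z̄) = Σ_{j=1}^R |H_j(Z)|²` with `H_j` linearly independent
homogeneous of degree `d+1`, and `p ≥ n+1`, then `R ≥ (n+1)(n+2)/2`. -/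
theorem sos_rank_bihomogeneous_high_rank
    (n p R d : ℕ)
    (F : Fin p → MvPolynomial (Fin (n + 1)) ℂ)
    (H : Fin R → MvPolynomial (Fin (n + 1)) ℂ)
    (hFhom : ∀ i, (F i).IsHomogeneous d)
    (hHhom : ∀ j, (H j).IsHomogeneous (d + 1))
    (hFli : LinearIndependent ℂ F)
    (hHli : LinearIndependent ℂ H)
    (heq : ∀ Z : Fin (n + 1) → ℂ,
      (∑ j, ‖Z j‖ ^ 2) * (∑ i, ‖MvPolynomial.eval Z (F i)‖ ^ 2)
        = ∑ j, ‖MvPolynomial.eval Z (H j)‖ ^ 2)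
    (hpn : n + 1 ≤ p) :
    (n + 1) * (n + 2) / 2 ≤ R :=
  sos_rank_bihomogeneous_high_rank_general n p R F H hFli heq hpn
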